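/- arXiv:0801.2493 — 2 statements merged into one kernel-verified Lean document; each statement's English description precedes it below -/
import Mathlib

section
/- Let N ≥ 1, B ∈ GL(2, ℤ/Nℤ), g : (ℤ/Nℤ)² → ℝ, (Uψ)(Q) = exp(2πi·g(Q))·ψ(BQ). If ψ is an eigenvector of U with eigenvalue λ, and ξ ∈ (ℤ/Nℤ)² satisfies ψ(ξ) ≠ 0, then λ^{T} = exp(2πi·Σ_{Q ∈ [ξ]} g(Q)), where [ξ] = {B^k ξ : k ∈ ℤ} is the orbit of ξ under B and T is the cardinality of [ξ]. -/
open scoped BigOperators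

/-!
Since `B` is invertible and `(ZMod N)²` is finite, `ξ` is a periodic point of `Q ↦ B Q` whose
minimal period `T` is the size of its orbit. Iterating the eigenvalue equation `T` times along the
orbit gives `λ^T ψ(ξ) = (∏_{k<T} e(g(Bᵏξ))) ψ(Bᵀξ) = e(∑_{Q ∈ [ξ]} g Q) ψ(ξ)`, and `ψ(ξ) ≠ 0`.
-/

/-- `e x = exp(2πi x)` -/
noncomputable def e (x : ℝ) : ℂ := Complex.exp (2 * Real.pi * Complex.I * x)

lemma e_sum {ι : Type*} (s : Finset ι) (g : ι → ℝ) : e (∑ i ∈ s, g i) = ∏ i ∈ s, e (g i) := by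
  simp only [e, Complex.ofReal_sum, Finset.mul_sum, Complex.exp_sum]

lemma Matrix.pow_mulVec_eq_iterate {n R : Type*} [Fintype n] [DecidableEq n] [Semiring R]
    (B : Matrix n n R) (k : ℕ) (v : n → R) : (B ^ k).mulVec v = B.mulVec^[k] v := by
  induction k with
  | zero => simp
  | succ k ih => rw [pow_succ', ← Matrix.mulVec_mulVec, ih, Function.iterate_succ_apply']

namespace Function

variable {α : Type*} {f : α → α} {x : α}

theorem range_iterate_eq_image_range_minimalPeriod [DecidableEq α] (hx : x ∈ periodicPts f) :
    Set.range (f^[·] x) = ((Finset.range (minimalPeriod f x)).image (f^[·] x) : Set α) := by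
  ext y
  simp only [Set.mem_range, Finset.coe_image, Finset.coe_range, Set.mem_image, Set.mem_Iio]
  constructor
  · rintro ⟨n, rfl⟩
    exact ⟨n % minimalPeriod f x, Nat.mod_lt _ (minimalPeriod_pos_of_mem_periodicPts hx),
      iterate_mod_minimalPeriod_eq⟩
  · rintro ⟨n, -, rfl⟩
    exact ⟨n, rfl⟩

theorem ncard_range_iterate (hx : x ∈ periodicPts f) :
    (Set.range (f^[·] x)).ncard = minimalPeriod f x := by
  classical
  rw [range_iterate_eq_image_range_minimalPeriod hx, Set.ncard_coe_finset,
    Finset.card_image_of_injOn (by simpa using iterate_injOn_Iio_minimalPeriod), Finset.card_range]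

theorem sum_toFinset_range_iterate {M : Type*} [AddCommMonoid M] (hx : x ∈ periodicPts f)
    (hs : (Set.range (f^[·] x)).Finite) (g : α → M) :
    ∑ y ∈ hs.toFinset, g y = ∑ k ∈ Finset.range (minimalPeriod f x), g (f^[k] x) := by
  classical
  have hs_eq : hs.toFinset = (Finset.range (minimalPeriod f x)).image (f^[·] x) :=
    Finset.coe_injective (by rw [hs.coe_toFinset, range_iterate_eq_image_range_minimalPeriod hx])
  rw [hs_eq, Finset.sum_image (by simpa using iterate_injOn_Iio_minimalPeriod)]

variable {M : Type*} {c ψ : α → M} {lam : M}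

theorem pow_mul_eq_prod_mul_iterate [CommMonoid M] (h : ∀ y, c y * ψ (f y) = lam * ψ y)
    (x : α) (n : ℕ) :
    lam ^ n * ψ x = (∏ k ∈ Finset.range n, c (f^[k] x)) * ψ (f^[n] x) := by
  induction n with
  | zero => simp
  | succ n ih =>
    rw [pow_succ', mul_assoc, ih, Finset.prod_range_succ, iterate_succ_apply', mul_assoc, h]
    exact mul_left_comm _ _ _

theorem pow_minimalPeriod_eq_prod [CommMonoidWithZero M] [IsCancelMulZero M]
    (h : ∀ y, c y * ψ (f y) = lam * ψ y) (hx : ψ x ≠ 0) :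
    lam ^ minimalPeriod f x = ∏ k ∈ Finset.range (minimalPeriod f x), c (f^[k] x) := by
  have := pow_mul_eq_prod_mul_iterate h x (minimalPeriod f x)
  rw [iterate_minimalPeriod] at this
  exact mul_right_cancel₀ hx this

end Function

theorem stmt2_general (N : ℕ) [NeZero N]
    (B : Matrix (Fin 2) (Fin 2) (ZMod N)) (hB : IsUnit B.det)
    (g : (Fin 2 → ZMod N) → ℝ)
    (ψ : (Fin 2 → ZMod N) → ℂ) (lam : ℂ)
    (heig : ∀ Q, e (g Q) * ψ (B.mulVec Q) = lam * ψ Q)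
    (ξ : Fin 2 → ZMod N) (hξ : ψ ξ ≠ 0)
    (orb : Set (Fin 2 → ZMod N))
    (horb : orb = {Q | ∃ k : ℕ, Q = (B ^ k).mulVec ξ}) :
    lam ^ orb.ncard = e (∑ Q ∈ orb.toFinite.toFinset, g Q) := by
  have hξ_periodic : ξ ∈ Function.periodicPts B.mulVec :=
    (Matrix.mulVec_injective_of_det_mem_nonZeroDivisors hB.mem_nonZeroDivisors).mem_periodicPts ξ
  obtain rfl : orb = Set.range (B.mulVec^[·] ξ) := by
    rw [horb]
    ext Q
    simp [Matrix.pow_mulVec_eq_iterate, eq_comm]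
  rw [Function.ncard_range_iterate hξ_periodic,
    Function.sum_toFinset_range_iterate hξ_periodic, e_sum]
  exact Function.pow_minimalPeriod_eq_prod (c := fun Q => e (g Q)) heig hξ

/-- if `ψ` is an eigenvector of `(Uψ)(Q) = exp(2πi g(Q)) ψ(BQ)` with eigenvalue
`λ` and `ψ(ξ) ≠ 0`, then `λ^T = exp(2πi Σ_{Q ∈ [ξ]} g(Q))` where `[ξ]` is the `B`-orbit of `ξ`
and `T` its cardinality. -/
theorem stmt2 (N : ℕ) [NeZero N] (hN : 1 ≤ N)
    (B : Matrix (Fin 2) (Fin 2) (ZMod N)) (hB : IsUnit B.det)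
    (g : (Fin 2 → ZMod N) → ℝ)
    (ψ : (Fin 2 → ZMod N) → ℂ) (lam : ℂ)
    (hψ : ψ ≠ 0)
    (heig : ∀ Q, e (g Q) * ψ (B.mulVec Q) = lam * ψ Q)
    (ξ : Fin 2 → ZMod N) (hξ : ψ ξ ≠ 0)
    (orb : Set (Fin 2 → ZMod N))
    (horb : orb = {Q | ∃ k : ℕ, Q = (B ^ k).mulVec ξ}) :
    lam ^ orb.ncard = e (∑ Q ∈ orb.toFinite.toFinset, g Q) :=
  stmt2_general N B hB g ψ lam heig ξ hξ orb horb
end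

section
/- Let σ be a bijection of a finite set S, f : S → ℝ, and U on ℂ^S given by (Uψ)(s) = exp(2πi·f(s))·ψ(σ(s)). Suppose the σ-orbits O₁,…,O_r have sizes T₁,…,T_r and orbit sums a_i = Σ_{s ∈ O_i} f(s). If the values exp(2πi·(a_i/T_i + j/T_i)) for 1 ≤ i ≤ r, 1 ≤ j ≤ T_i are pairwise distinct, then U has simple spectrum (all eigenspaces are one-dimensional). -/
open scoped BigOperators

/-!
Iterating the eigen-equation `μ ψ(s) = e(f s) ψ(σ s)` along the forward orbit of `s` shows that an
eigenvector is determined on that orbit by its value at `s`, and going once around an orbit of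
length `T` and sum `a` through a point where `ψ` does not vanish forces `μ ^ T = e a`, i.e.
`μ = e (a/T + j/T)` for some `1 ≤ j ≤ T`. The distinctness hypothesis therefore confines every
eigenvector for `μ` to one orbit, on which any two of them are proportional.
-/

open Finset Function

lemma e_add (x y : ℝ) : e (x + y) = e x * e y := by
  rw [e, e, e, ← Complex.exp_add]
  push_cast
  ring_nf

lemma e_ne_zero (x : ℝ) : e x ≠ 0 := Complex.exp_ne_zero _

lemma e_one : e 1 = 1 := by
  simp [e]

lemma e_pow (x : ℝ) (n : ℕ) : e x ^ n = e (n * x) := by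
  rw [e, e, ← Complex.exp_nat_mul]
  push_cast
  ring_nf

lemma exists_eq_e_of_pow_eq_e {μ : ℂ} {T : ℕ} (hT : 0 < T) {a : ℝ} (h : μ ^ T = e a) :
    ∃ j : ℕ, 1 ≤ j ∧ j ≤ T ∧ μ = e (a / T + j / T) := by
  have hTR : (T : ℝ) ≠ 0 := by positivity
  have hroot : (μ / e (a / T + 1 / T)) ^ T = 1 := by
    rw [div_pow, e_pow, show (T : ℝ) * (a / T + 1 / T) = a + 1 by field_simp, e_add, e_one,
      mul_one, h, div_self (e_ne_zero a)]
  have : NeZero T := ⟨hT.ne'⟩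
  obtain ⟨i, hiT, hi⟩ := (Complex.isPrimitiveRoot_exp T hT.ne').eq_pow_of_pow_eq_one hroot
  have hζi : Complex.exp (2 * Real.pi * Complex.I / T) ^ i = e (i / T) := by
    rw [e, ← Complex.exp_nat_mul]
    congr 1
    push_cast
    ring
  refine ⟨i + 1, by omega, hiT, ?_⟩
  rw [← div_mul_cancel₀ μ (e_ne_zero (a / T + 1 / T)), ← hi, hζi, ← e_add]
  congr 1
  push_cast
  ring

section TwistedShift

variable {S : Type*}

noncomputable def twistedShift (σ : S → S) (f : S → ℝ) (ψ : S → ℂ) : S → ℂ :=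
  fun s => e (f s) * ψ (σ s)

variable {σ : S → S} {f : S → ℝ} {μ : ℂ} {ψ φ : S → ℂ}

lemma pow_mul_eq_of_twistedShift_eq_smul (hψ : twistedShift σ f ψ = μ • ψ) (k : ℕ) (s : S) :
    μ ^ k * ψ s = e (∑ j ∈ range k, f (σ^[j] s)) * ψ (σ^[k] s) := by
  induction k with
  | zero => simp [e]
  | succ k ih =>
    have step : μ * ψ (σ^[k] s) = e (f (σ^[k] s)) * ψ (σ^[k + 1] s) := by
      rw [iterate_succ_apply']
      exact (congrFun hψ _).symm
    rw [pow_succ', mul_assoc, ih, mul_left_comm, step, sum_range_succ, e_add]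
    ring

lemma exists_eq_e_of_twistedShift_eq_smul (hψ : twistedShift σ f ψ = μ • ψ) {s : S}
    (hs : ψ s ≠ 0) {T : ℕ} (hT : 0 < T) (hper : IsPeriodicPt σ T s) :
    ∃ j : ℕ, 1 ≤ j ∧ j ≤ T ∧ μ = e ((∑ k ∈ range T, f (σ^[k] s)) / T + j / T) :=
  exists_eq_e_of_pow_eq_e hT <| mul_right_cancel₀ hs <| by
    rw [pow_mul_eq_of_twistedShift_eq_smul hψ, hper.eq]

lemma mul_iterate_eq_of_twistedShift_eq_smul (hψ : twistedShift σ f ψ = μ • ψ)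
    (hφ : twistedShift σ f φ = μ • φ) (m : ℕ) (s : S) :
    φ (σ^[m] s) * ψ s = φ s * ψ (σ^[m] s) := by
  have hψm := pow_mul_eq_of_twistedShift_eq_smul hψ m s
  have hφm := pow_mul_eq_of_twistedShift_eq_smul hφ m s
  apply mul_left_cancel₀ (e_ne_zero (∑ j ∈ range m, f (σ^[j] s)))
  linear_combination φ s * hψm - ψ s * hφm

lemma eq_smul_of_twistedShift_eq_smul (hψ : twistedShift σ f ψ = μ • ψ)
    (hφ : twistedShift σ f φ = μ • φ) {s₀ : S} (hs₀ : ψ s₀ ≠ 0)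
    (hψ_supp : ∀ t, ψ t ≠ 0 → ∃ m, t = σ^[m] s₀) (hφ_supp : ∀ t, φ t ≠ 0 → ∃ m, t = σ^[m] s₀) :
    φ = (φ s₀ / ψ s₀) • ψ := by
  funext t
  rw [Pi.smul_apply, smul_eq_mul]
  by_cases ht : ∃ m, t = σ^[m] s₀
  · obtain ⟨m, rfl⟩ := ht
    rw [div_mul_eq_mul_div, eq_div_iff hs₀]
    exact mul_iterate_eq_of_twistedShift_eq_smul hψ hφ m s₀
  · rw [not_not.1 (mt (hψ_supp t) ht), not_not.1 (mt (hφ_supp t) ht), mul_zero]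

end TwistedShift

/-- if the candidate eigenvalues `exp(2πi(a_i/T_i + j/T_i))` attached to the
orbits of `σ` (with orbit sizes `T_i` and orbit sums `a_i`) are pairwise distinct, then the
twisted shift `(Uψ)(s) = exp(2πi f(s)) ψ(σ s)` has simple spectrum: all eigenspaces are
one-dimensional. -/
theorem stmt17 (S : Type*) [Fintype S] (σ : Equiv.Perm S) (f : S → ℝ)
    (T : S → ℕ) (hT : ∀ s, T s = Function.minimalPeriod (⇑σ) s)
    (a : S → ℝ) (ha : ∀ s, a s = ∑ k ∈ Finset.range (T s), f ((⇑σ)^[k] s))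
    (hdist : ∀ s t : S, ∀ j k : ℕ, 1 ≤ j → j ≤ T s → 1 ≤ k → k ≤ T t →
      e (a s / T s + (j : ℝ) / T s) = e (a t / T t + (k : ℝ) / T t) →
      (∃ m : ℕ, t = (⇑σ)^[m] s) ∧ j = k)
    (U : (S → ℂ) → (S → ℂ)) (hU : ∀ ψ s, U ψ s = e (f s) * ψ (σ s)) :
    ∀ (μ : ℂ) (ψ φ : S → ℂ), ψ ≠ 0 → φ ≠ 0 → U ψ = μ • ψ → U φ = μ • φ →
      ∃ c : ℂ, φ = c • ψ := by
  obtain rfl : U = twistedShift σ f := funext fun ψ => funext (hU ψ)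
  have hform : ∀ (μ : ℂ) (χ : S → ℂ), twistedShift σ f χ = μ • χ → ∀ s, χ s ≠ 0 →
      ∃ j : ℕ, 1 ≤ j ∧ j ≤ T s ∧ μ = e (a s / T s + j / T s) := by
    intro μ χ hχ s hs
    rw [ha s, hT s]
    exact exists_eq_e_of_twistedShift_eq_smul hχ hs
      (minimalPeriod_pos_of_mem_periodicPts (σ.injective.mem_periodicPts s))
      (isPeriodicPt_minimalPeriod σ s)
  intro μ ψ φ hψ0 _ hψ hφ
  obtain ⟨s₀, hs₀⟩ := Function.ne_iff.mp hψ0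
  obtain ⟨j₀, hj₀, hj₀T, hμ⟩ := hform μ ψ hψ s₀ hs₀
  have hsupp : ∀ χ, twistedShift σ f χ = μ • χ → ∀ t, χ t ≠ 0 → ∃ m, t = σ^[m] s₀ := by
    intro χ hχ t ht
    obtain ⟨k, hk, hkT, hμ'⟩ := hform μ χ hχ t ht
    exact (hdist s₀ t j₀ k hj₀ hj₀T hk hkT (hμ.symm.trans hμ')).1
  exact ⟨_, eq_smul_of_twistedShift_eq_smul hψ hφ hs₀ (hsupp ψ hψ) (hsupp φ hφ)⟩
end
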